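/- Loss of the near-optimal abstaining strategy against nature's minimax play: for 0 < α < 1/2, L(p^alg, g*, z*) = α·(1 - v/n) + (1/2 - α)·(1/n)·∑_{i>v} |a_i|/|a_v| + (1-θ)/(2n); in particular, by playing z* nature forces a loss of at least α·(1 - v/n) + (1/2 - α)·(1/n)·∑_{i>v} |a_i|/|a_v| against the strategy (p^alg, g*). -/
import Mathlib


open Finset

/-- Expected loss of the abstain game with abstention cost `α`,
abstain probabilities `p`, prediction `g`, and labels `z`. -/
noncomputable def Labst (n : ℕ) (α : ℝ) (p g z : ℕ → ℝ) : ℝ :=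
  (1 / (n : ℝ)) * ∑ i ∈ Icc 1 n,
    (p i * α + (1 / 2) * (1 - p i) * (1 - g i * z i))

/-- The minimax optimal predictor strategy. -/
noncomputable def gstar (a : ℕ → ℝ) (v : ℕ) : ℕ → ℝ :=
  fun i => if i ≤ v then Real.sign (a i) else a i / |a v|

/-- Nature's minimax optimal strategy. -/
noncomputable def zstar (n : ℕ) (a : ℕ → ℝ) (lam : ℝ) (v : ℕ) : ℕ → ℝ :=
  fun i =>
    if i < v then Real.sign (a i)
    else if i = v then ((n : ℝ) * lam - ∑ j ∈ Icc 1 (v - 1), |a j|) / a v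
    else 0

/-- The near-optimal abstain probabilities. -/
noncomputable def palg (a : ℕ → ℝ) (v : ℕ) : ℕ → ℝ :=
  fun i => if i ≤ v then 0 else 1 - |a i| / |a v|


private lemma sign_sq {x : ℝ} (hx : x ≠ 0) : Real.sign x * Real.sign x = 1 := by
  rcases hx.lt_or_gt with h | h
  · rw [Real.sign_of_neg h]; norm_num
  · rw [Real.sign_of_pos h]; norm_num

/-- loss of the near-optimal abstaining strategy against nature's
minimax play z*. -/
theorem near_optimal_abstain_loss
    (n : ℕ) (hn : 1 ≤ n) (a : ℕ → ℝ)
    (hord : ∀ i j : ℕ, 1 ≤ i → i ≤ j → j ≤ n → |a j| ≤ |a i|)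
    (lam : ℝ) (hlam_pos : 0 < lam)
    (hlam_le : lam ≤ (1 / (n : ℝ)) * ∑ i ∈ Icc 1 n, |a i|)
    (v : ℕ) (hv1 : 1 ≤ v) (hvn : v ≤ n)
    (hv_ge : lam ≤ (1 / (n : ℝ)) * ∑ j ∈ Icc 1 v, |a j|)
    (hv_min : ∀ i : ℕ, 1 ≤ i → i < v → (1 / (n : ℝ)) * ∑ j ∈ Icc 1 i, |a j| < lam)
    (θ : ℝ)
    (hθ : θ = ((n : ℝ) * lam - ∑ i ∈ Icc 1 (v - 1), |a i|) / |a v|)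
    (α : ℝ) (hα0 : 0 < α) (hαhalf : α < 1 / 2) :
    Labst n α (palg a v) (gstar a v) (zstar n a lam v) =
      α * (1 - (v : ℝ) / n) +
        (1 / 2 - α) * (1 / (n : ℝ)) * (∑ i ∈ Icc (v + 1) n, |a i| / |a v|) +
        (1 - θ) / (2 * (n : ℝ)) ∧
    α * (1 - (v : ℝ) / n) +
        (1 / 2 - α) * (1 / (n : ℝ)) * (∑ i ∈ Icc (v + 1) n, |a i| / |a v|) ≤
      Labst n α (palg a v) (gstar a v) (zstar n a lam v) := by

  obtain ⟨u, rfl⟩ : ∃ u, v = u + 1 := ⟨v - 1, by omega⟩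
  simp only [Nat.add_sub_cancel] at hθ ⊢
  have hnR : (0:ℝ) < (n:ℝ) := by exact_mod_cast (hn : 0 < n)
  -- previous partial sum is below n·lam
  have hprev : ∑ j ∈ Icc 1 u, |a j| < (n:ℝ) * lam := by
    rcases Nat.eq_zero_or_pos u with h | h
    · subst h
      have : Icc 1 0 = (∅ : Finset ℕ) := by simp
      rw [this, Finset.sum_empty]
      positivity
    · have h2 := hv_min u (by omega) (by omega)
      rw [one_div_mul_eq_div, div_lt_iff₀ hnR] at h2
      nlinarith
  have hnlamS : (n:ℝ) * lam ≤ ∑ j ∈ Icc 1 (u+1), |a j| := by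
    rw [one_div_mul_eq_div, le_div_iff₀ hnR] at hv_ge
    nlinarith
  have hSv : ∑ j ∈ Icc 1 (u+1), |a j| = (∑ j ∈ Icc 1 u, |a j|) + |a (u+1)| :=
    Finset.sum_Icc_succ_top (by omega) _
  have hav : 0 < |a (u+1)| := by rw [hSv] at hnlamS; linarith
  have havne : a (u+1) ≠ 0 := by simpa using hav.ne'
  have hane : ∀ i, 1 ≤ i → i ≤ u + 1 → a i ≠ 0 := by
    intro i h1 h2
    exact abs_pos.mp (lt_of_lt_of_le hav (hord i (u+1) h1 h2 hvn))
  have hθ1 : θ ≤ 1 := by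
    rw [hθ, div_le_one hav]
    rw [hSv] at hnlamS; linarith
  -- value at v
  have hFv : palg a (u+1) (u+1) * α + (1/2) * (1 - palg a (u+1) (u+1)) *
      (1 - gstar a (u+1) (u+1) * zstar n a lam (u+1) (u+1)) = 1/2 * (1 - θ) := by
    simp only [palg, gstar, zstar, le_refl, if_true, lt_irrefl, if_false, if_pos rfl]
    have hsz : Real.sign (a (u+1)) * (((n:ℝ) * lam - ∑ j ∈ Icc 1 (u+1-1), |a j|) / a (u+1))
        = θ := by
      simp only [Nat.add_sub_cancel]
      rw [hθ]
      rcases havne.lt_or_gt with h | h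
      · rw [Real.sign_of_neg h, abs_of_neg h, div_neg]; ring
      · rw [Real.sign_of_pos h, abs_of_pos h, one_mul]
    rw [hsz]; ring
  -- sum over 1..u vanishes
  have hsum0 : ∑ i ∈ Icc 1 u, (palg a (u+1) i * α + (1/2) * (1 - palg a (u+1) i) *
      (1 - gstar a (u+1) i * zstar n a lam (u+1) i)) = 0 := by
    apply Finset.sum_eq_zero
    intro i hi
    simp only [mem_Icc] at hi
    have h1 : i ≤ u + 1 := by omega
    have h2 : i < u + 1 := by omega
    simp only [palg, gstar, zstar, if_pos h1, if_pos h2]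
    rw [sign_sq (hane i hi.1 h1)]; ring
  -- sum over v+1..n
  have hsum2 : ∑ i ∈ Icc (u+2) n, (palg a (u+1) i * α + (1/2) * (1 - palg a (u+1) i) *
      (1 - gstar a (u+1) i * zstar n a lam (u+1) i))
      = ((n:ℝ) - (u+1)) * α + (1/2 - α) * ∑ i ∈ Icc (u+2) n, |a i| / |a (u+1)| := by
    have hc : ∀ i ∈ Icc (u+2) n, (palg a (u+1) i * α + (1/2) * (1 - palg a (u+1) i) *
        (1 - gstar a (u+1) i * zstar n a lam (u+1) i))
        = α + (1/2 - α) * (|a i| / |a (u+1)|) := by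
      intro i hi
      simp only [mem_Icc] at hi
      have h1 : ¬ i ≤ u + 1 := by omega
      have h2 : ¬ i < u + 1 := by omega
      have h3 : i ≠ u + 1 := by omega
      simp only [palg, gstar, zstar, if_neg h1, if_neg h2, if_neg h3]
      ring
    rw [Finset.sum_congr rfl hc, Finset.sum_add_distrib, Finset.sum_const, Nat.card_Icc,
      nsmul_eq_mul, Finset.mul_sum]
    have hcst : ((n + 1 - (u + 2) : ℕ) : ℝ) = (n:ℝ) - ((u:ℝ)+1) := by
      have h' : n + 1 - (u + 2) = n - (u+1) := by omega
      rw [h', Nat.cast_sub (by omega)]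
      push_cast; ring
    rw [hcst]
  -- assemble
  have hdisj : Disjoint (Icc 1 (u+1)) (Ioc (u+1) n) := by
    rw [Finset.disjoint_left]
    intro x hx hx'
    simp only [mem_Icc, mem_Ioc] at hx hx'
    omega
  have hIoc : Icc (u+2) n = Ioc (u+1) n := Finset.Icc_add_one_left_eq_Ioc (u+1) n
  have hsplit : Icc 1 n = Icc 1 (u+1) ∪ Ioc (u+1) n := by
    ext x; simp only [mem_Icc, mem_union, mem_Ioc]; omega
  have hL : Labst n α (palg a (u+1)) (gstar a (u+1)) (zstar n a lam (u+1)) =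
      (1/(n:ℝ)) * (1/2 * (1 - θ) + ((n:ℝ) - (u+1)) * α
        + (1/2 - α) * ∑ i ∈ Icc (u+2) n, |a i| / |a (u+1)|) := by
    rw [Labst, hsplit, Finset.sum_union hdisj, ← hIoc,
      Finset.sum_Icc_succ_top (by omega : 1 ≤ u + 1), hsum0, hFv, hsum2]
    ring
  have hI : Icc (u+1+1) n = Icc (u+2) n := rfl
  constructor
  · rw [hL]
    push_cast
    rw [hI]
    field_simp
    ring
  · rw [hL]
    push_cast
    rw [hI]
    rw [← sub_nonneg]
    have e2 : 1/(n:ℝ) * (1/2 * (1 - θ) + ((n:ℝ) - ((u:ℝ)+1)) * α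
          + (1/2 - α) * ∑ i ∈ Icc (u+2) n, |a i| / |a (u+1)|)
        - (α * (1 - ((u:ℝ)+1) / n) + (1/2 - α) * (1/(n:ℝ)) * ∑ i ∈ Icc (u+2) n, |a i| / |a (u+1)|)
        = (1 - θ) / (2 * (n:ℝ)) := by
      field_simp
      ring
    rw [e2]
    have : 0 ≤ 1 - θ := by linarith
    positivity
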